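/- Theorem (rolling-window TLMP yields zero lost opportunity cost): Let T ≥ 1, A the T×T ramp matrix, P = {h ∈ ℝ^T : 0 ≤ h ≤ ḡ and −ṟ ≤ A h ≤ r̄} for given nonnegative vectors ḡ, ṟ, r̄ ∈ ℝ^T, and f(h) = Σ_{t=1}^T f_t(h_t) with f_t : ℝ → ℝ. Let π ∈ ℝ^T and let g ∈ P be such that for every interval t, g_t minimizes the single-interval objective f_t(x) − π_t x over x ∈ [0, ḡ_t]. Then g minimizes f(h) − πᵀh over P; equivalently, the lost opportunity cost LOC(π,g) = sup_{h ∈ P}(πᵀh − f(h)) − (πᵀg − f(g)) equals zero, and the pair (g, π) satisfies both the individual-rationality condition of a general equilibrium and the per-interval strong-equilibrium condition. -/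
import Mathlib


/-- The T×T ramp matrix: lower bidiagonal with 1 on the diagonal and -1 on
the first subdiagonal. -/
def rampMatrix (T : ℕ) : Matrix (Fin T) (Fin T) ℝ :=
  fun i j => if i = j then 1 else if (j : ℕ) + 1 = (i : ℕ) then -1 else 0

/-- The generator feasible set
`P = {h : 0 ≤ h ≤ ḡ and -ṟ ≤ A h ≤ r̄ componentwise}`. -/
def genFeasible {T : ℕ} (gbar rlo rhi : Fin T → ℝ) : Set (Fin T → ℝ) :=
  {h | (∀ t, 0 ≤ h t ∧ h t ≤ gbar t) ∧
       (∀ t, -(rlo t) ≤ (rampMatrix T).mulVec h t ∧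
             (rampMatrix T).mulVec h t ≤ rhi t)}

/-- Rolling-window TLMP yields zero lost opportunity cost: if the realized
rolling-window dispatch `g` lies in the ramp-constrained feasible set `P` and
each `g_t` minimizes the single-interval objective `f_t(x) - π_t x` over
`[0, ḡ_t]`, then `g` minimizes `f(h) - πᵀh` over all of `P`; equivalently the
LOC is zero: the supremum of the profit `πᵀh - f(h)` over `P` equals the
profit at `g`.  The hypotheses already express the per-interval
strong-equilibrium condition, and the conclusion is the individual-rationality
condition of a general equilibrium. -/
theorem rolling_window_tlmp_zero_loc {T : ℕ} (hT : 1 ≤ T)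
    (gbar rlo rhi : Fin T → ℝ)
    (hgbar : ∀ t, 0 ≤ gbar t) (hrlo : ∀ t, 0 ≤ rlo t) (hrhi : ∀ t, 0 ≤ rhi t)
    (f : Fin T → ℝ → ℝ)
    (π : Fin T → ℝ)
    (g : Fin T → ℝ)
    (hgP : g ∈ genFeasible gbar rlo rhi)
    (hinterval : ∀ t, ∀ x ∈ Set.Icc (0 : ℝ) (gbar t),
      f t (g t) - π t * g t ≤ f t x - π t * x) :
    (∀ h ∈ genFeasible gbar rlo rhi,
      (∑ t, f t (g t)) - ∑ t, π t * g t ≤ (∑ t, f t (h t)) - ∑ t, π t * h t) ∧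
    sSup ((fun h : Fin T → ℝ => (∑ t, π t * h t) - ∑ t, f t (h t)) ''
        genFeasible gbar rlo rhi)
      = (∑ t, π t * g t) - ∑ t, f t (g t) := by
  have key : ∀ h ∈ genFeasible gbar rlo rhi,
      (∑ t, f t (g t)) - ∑ t, π t * g t ≤ (∑ t, f t (h t)) - ∑ t, π t * h t := by
    intro h hh
    rw [← Finset.sum_sub_distrib, ← Finset.sum_sub_distrib]
    exact Finset.sum_le_sum fun t _ => hinterval t (h t) ⟨(hh.1 t).1, (hh.1 t).2⟩
  refine ⟨key, ?_⟩
  apply IsGreatest.csSup_eq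
  constructor
  · exact ⟨g, hgP, rfl⟩
  · rintro x ⟨h, hh, rfl⟩
    have := key h hh
    simp only []
    linarith
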